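/- Under the setting of Proposition 1, the optimal value of the temporally aggregated model is a lower bound on the optimal value of the full-scale model: if S ⊆ ℝ denotes the set of full-scale objective values F(z) over all z satisfying the full-scale constraints, and S̄ ⊆ ℝ denotes the set of aggregated objective values F̄(z̄) over all z̄ satisfying the aggregated constraints, then for every v ∈ S there exists v̄ ∈ S̄ with v̄ ≤ v; consequently, if S is nonempty and S̄ is bounded below, then inf S̄ ≤ inf S. -/

import Mathlib

/-- Decision variables of the VPP dispatch model (full-scale: indexed by time steps `k`;
temporally aggregated: indexed by clusters `r`). -/
structure DispatchVars (Ω N G : Type*) where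
  /-- energy output of the VPP -/
  e : Ω → ℕ → ℝ
  /-- non-supplied energy -/
  ens : Ω → ℕ → ℝ
  /-- storage state of charge -/
  es : N → Ω → ℕ → ℝ
  /-- thermal power output -/
  pth : G → Ω → ℕ → ℝ
  /-- storage charging power -/
  pc : N → Ω → ℕ → ℝ
  /-- storage discharging power -/
  pd : N → Ω → ℕ → ℝ

/-- Parameters of the VPP dispatch model. -/
structure VPPParams (Ω N G : Type*) where
  /-- sampling time -/
  Δ : ℝ
  /-- charging / discharging efficiencies -/
  (ηc ηd : N → ℝ)
  /-- initial storage states -/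
  Es0 : N → ℝ
  /-- storage state bounds -/
  (Esmin Esmax : N → ℝ)
  /-- charging power bounds -/
  (Pcmin Pcmax : N → ℝ)
  /-- discharging power bounds -/
  (Pdmin Pdmax : N → ℝ)
  /-- thermal capacity -/
  Pthmax : G → ℝ
  /-- emission coefficients and limits -/
  (αg βg Lg : G → ℝ)
  /-- ramp limits -/
  Rth : G → ℝ
  /-- vRES forecast and demand forecast -/
  (Pv D : Ω → ℕ → ℝ)
  /-- energy prices -/
  π : Ω → ℕ → ℝ
  /-- thermal generation cost -/
  Cth : G → ℝ
  /-- non-supplied energy penalty -/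
  Cns : ℝ
  /-- storage charging / discharging costs -/
  (Cc Cd : N → ℝ)
  /-- storage reference-deviation penalty and reference states -/
  (Cref Eref : N → ℝ)

/-- Feasibility for the full-scale stochastic dispatch model over the horizon
`{0, ..., K-1}`: storage dynamics, initial state, state-of-charge bounds,
charging/discharging bounds, thermal bounds, quadratic emission constraints,
ramp constraints, energy balance, and nonnegativity of all variables. -/
def FSFeasible {Ω N G : Type*} [Fintype N] [Fintype G]
    (P : VPPParams Ω N G) (K : ℕ) (z : DispatchVars Ω N G) : Prop :=
  (∀ n ω k, k + 2 ≤ K →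
      z.es n ω (k + 1) = z.es n ω k + (P.ηc n * z.pc n ω k - P.ηd n * z.pd n ω k) * P.Δ) ∧
  (∀ n ω, z.es n ω 0 = P.Es0 n) ∧
  (∀ n ω k, k < K → P.Esmin n ≤ z.es n ω k ∧ z.es n ω k ≤ P.Esmax n) ∧
  (∀ n ω k, k < K → P.Pcmin n ≤ z.pc n ω k ∧ z.pc n ω k ≤ P.Pcmax n) ∧
  (∀ n ω k, k < K → P.Pdmin n ≤ z.pd n ω k ∧ z.pd n ω k ≤ P.Pdmax n) ∧
  (∀ g ω k, k < K → 0 ≤ z.pth g ω k ∧ z.pth g ω k ≤ P.Pthmax g) ∧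
  (∀ g ω k, k < K → P.αg g * z.pth g ω k ^ 2 + P.βg g * z.pth g ω k ≤ P.Lg g) ∧
  (∀ g ω k, k + 2 ≤ K → |z.pth g ω (k + 1) - z.pth g ω k| ≤ P.Rth g) ∧
  (∀ ω k, k < K →
      z.e ω k = P.Pv ω k * P.Δ - P.D ω k
        + (∑ n : N, (z.pd n ω k - z.pc n ω k)) * P.Δ
        + (∑ g : G, z.pth g ω k) * P.Δ + z.ens ω k) ∧
  (∀ ω k, k < K → 0 ≤ z.e ω k ∧ 0 ≤ z.ens ω k) ∧
  (∀ n ω k, k < K → 0 ≤ z.es n ω k ∧ 0 ≤ z.pc n ω k ∧ 0 ≤ z.pd n ω k)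

/-- Full-scale objective `F`: negated revenue, thermal generation costs, non-supplied
energy penalty, storage charging/discharging costs, and quadratic storage-reference
penalties, summed over scenarios and time steps. -/
noncomputable def FSObj {Ω N G : Type*} [Fintype Ω] [Fintype N] [Fintype G]
    (P : VPPParams Ω N G) (K : ℕ) (z : DispatchVars Ω N G) : ℝ :=
  (∑ ω : Ω, ∑ k ∈ Finset.range K,
      (-(P.π ω k) * z.e ω k
        + (∑ g : G, P.Cth g * z.pth g ω k * P.Δ)
        + P.Cns * z.ens ω k
        + ∑ n : N, (P.Cc n * z.pc n ω k + P.Cd n * z.pd n ω k) * P.Δ))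
    + ∑ n : N, ∑ ω : Ω, ∑ k ∈ Finset.range K, P.Cref n * (z.es n ω k - P.Eref n) ^ 2

/-- Cardinality `|K_r| = t (r+1) - t r` (as a real number) of the contiguous cluster
`K_r = {t r, ..., t (r+1) - 1}`. -/
def clusterCard (t : ℕ → ℕ) (r : ℕ) : ℝ := ((t (r + 1) - t r : ℕ) : ℝ)

/-- Feasibility for the temporally aggregated dispatch model over a contiguous cluster
partition `K_r = {t r, ..., t (r+1) - 1}`, `r = 0, ..., R-1`, of the horizon:
aggregated balance, aggregated storage dynamics with cluster cardinality multipliers,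
aggregated bounds, aggregated emission constraints with compensation term
`α_g*(|K_r|-1)*(P^th_max)²`, aggregated ramp constraints with compensation terms
`R^th_g*(|K_r|-1)/2`, and nonnegativity. -/
def AggFeasible {Ω N G : Type*} [Fintype N] [Fintype G]
    (P : VPPParams Ω N G) (R : ℕ) (t : ℕ → ℕ) (z : DispatchVars Ω N G) : Prop :=
  (∀ ω r, r < R →
      z.e ω r = (∑ k ∈ Finset.Ico (t r) (t (r + 1)), (P.Pv ω k * P.Δ - P.D ω k))
          / clusterCard t r
        + (∑ g : G, z.pth g ω r) * P.Δ + z.ens ω r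
        + (∑ n : N, (z.pd n ω r - z.pc n ω r)) * P.Δ) ∧
  (∀ n ω r, r + 2 ≤ R →
      z.es n ω (r + 1) = z.es n ω r
        + clusterCard t r * (P.ηc n * z.pc n ω r - P.ηd n * z.pd n ω r) * P.Δ) ∧
  (∀ n ω, z.es n ω 0 = P.Es0 n) ∧
  (∀ n ω r, r < R → P.Esmin n ≤ z.es n ω r ∧ z.es n ω r ≤ P.Esmax n) ∧
  (∀ n ω r, r < R → P.Pcmin n ≤ z.pc n ω r ∧ z.pc n ω r ≤ P.Pcmax n) ∧
  (∀ n ω r, r < R → P.Pdmin n ≤ z.pd n ω r ∧ z.pd n ω r ≤ P.Pdmax n) ∧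
  (∀ g ω r, r < R → 0 ≤ z.pth g ω r ∧ z.pth g ω r ≤ P.Pthmax g) ∧
  (∀ g ω r, r < R →
      P.αg g * clusterCard t r * z.pth g ω r ^ 2
        - P.αg g * (clusterCard t r - 1) * P.Pthmax g ^ 2
        + P.βg g * z.pth g ω r ≤ P.Lg g) ∧
  (∀ g ω r, r + 2 ≤ R →
      z.pth g ω (r + 1) - z.pth g ω r * clusterCard t r
          ≤ P.Rth g + P.Rth g * (clusterCard t (r + 1) - 1) / 2 ∧
      z.pth g ω r - z.pth g ω (r + 1) * clusterCard t (r + 1)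
          ≤ P.Rth g + P.Rth g * (clusterCard t r - 1) / 2) ∧
  (∀ ω r, r < R → 0 ≤ z.e ω r ∧ 0 ≤ z.ens ω r) ∧
  (∀ n ω r, r < R → 0 ≤ z.es n ω r ∧ 0 ≤ z.pc n ω r ∧ 0 ≤ z.pd n ω r)

/-- Aggregated objective `F̄`: same cost structure as `F`, with cluster-wise maximum
prices and cluster cardinality weights. -/
noncomputable def AggObj {Ω N G : Type*} [Fintype Ω] [Fintype N] [Fintype G]
    (P : VPPParams Ω N G) (R : ℕ) (t : ℕ → ℕ) (hmono : ∀ r < R, t r < t (r + 1))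
    (z : DispatchVars Ω N G) : ℝ :=
  (∑ ω : Ω, ∑ r : Fin R,
      clusterCard t r.1 *
        (-(((Finset.Ico (t r.1) (t (r.1 + 1))).sup'
              (Finset.nonempty_Ico.mpr (hmono r.1 r.2)) (P.π ω)) * z.e ω r.1)
          + (∑ g : G, P.Cth g * z.pth g ω r.1 * P.Δ)
          + P.Cns * z.ens ω r.1
          + ∑ n : N, (P.Cc n * z.pc n ω r.1 + P.Cd n * z.pd n ω r.1) * P.Δ))
    + ∑ n : N, ∑ ω : Ω, ∑ r : Fin R, P.Cref n * (z.es n ω r.1 - P.Eref n) ^ 2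

/-- The aggregation map: all aggregated variables are cluster averages, except the
aggregated storage states, which are the states at the first time step `t r` of each
cluster. -/
noncomputable def aggregate {Ω N G : Type*} (t : ℕ → ℕ) (z : DispatchVars Ω N G) :
    DispatchVars Ω N G where
  e := fun ω r => (1 / clusterCard t r) * ∑ k ∈ Finset.Ico (t r) (t (r + 1)), z.e ω k
  ens := fun ω r => (1 / clusterCard t r) * ∑ k ∈ Finset.Ico (t r) (t (r + 1)), z.ens ω k
  es := fun n ω r => z.es n ω (t r)
  pth := fun g ω r => (1 / clusterCard t r) * ∑ k ∈ Finset.Ico (t r) (t (r + 1)), z.pth g ω k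
  pc := fun n ω r => (1 / clusterCard t r) * ∑ k ∈ Finset.Ico (t r) (t (r + 1)), z.pc n ω k
  pd := fun n ω r => (1 / clusterCard t r) * ∑ k ∈ Finset.Ico (t r) (t (r + 1)), z.pd n ω k


/-! The aggregation map sends full-scale feasible points to aggregated feasible points without
increasing the objective, so every full-scale value dominates an aggregated one.

Bounds, balance and nonnegativity survive averaging over a cluster, and the storage dynamics
telescope across it. For the emission constraint, Jensen gives `α p̄² ≤ α · avg (p²)` and the
compensation term absorbs `α (|K_r| - 1) (p̄² - (P^th_max)²) ≤ 0`. For the ramp constraint, a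
ramp-limited sequence moves by at most `ρ d` over `d` steps, so the average over a cluster
exceeds the boundary value of the neighbouring cluster by at most `ρ (|K_r| + 1) / 2`, while a
sum of nonnegative terms dominates each of them. In the objective, the cluster-maximum price
can only lower the negated revenue since `e ≥ 0`, the remaining stage costs are linear, and the
storage penalty of the aggregated model keeps just the first term of each cluster. -/

open Finset
open scoped BigOperators

theorem csInf_le_csInf_of_forall_exists_le {α : Type*} [ConditionallyCompleteLattice α]
    {s t : Set α} (hs : s.Nonempty) (ht : BddBelow t) (h : ∀ x ∈ s, ∃ y ∈ t, y ≤ x) :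
    sInf t ≤ sInf s :=
  le_csInf hs fun x hx ↦ let ⟨_, hy, hyx⟩ := h x hx; (csInf_le ht hy).trans hyx

theorem sum_range_eq_sum_fin_sum_Ico {M : Type*} [AddCommGroup M] {t : ℕ → ℕ} {R : ℕ}
    (ht0 : t 0 = 0) (hmono : ∀ r < R, t r ≤ t (r + 1)) (f : ℕ → M) :
    ∑ k ∈ range (t R), f k = ∑ r : Fin R, ∑ k ∈ Ico (t r) (t (r + 1)), f k := by
  rw [Fin.sum_univ_eq_sum_range (fun r ↦ ∑ k ∈ Ico (t r) (t (r + 1)), f k),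
    sum_congr rfl fun r hr ↦ sum_Ico_eq_sub f (hmono r (mem_range.1 hr)),
    sum_range_sub (fun r ↦ ∑ k ∈ range (t r), f k), ht0, range_zero, sum_empty, sub_zero]

theorem expect_mem_Icc {ι : Type*} {s : Finset ι} (hs : s.Nonempty) {f : ι → ℝ} {a b : ℝ}
    (h : ∀ i ∈ s, f i ∈ Set.Icc a b) : 𝔼 i ∈ s, f i ∈ Set.Icc a b :=
  ⟨le_expect hs fun i hi ↦ (h i hi).1, expect_le hs fun i hi ↦ (h i hi).2⟩

theorem sq_expect_le_expect_sq {ι : Type*} {s : Finset ι} (hs : s.Nonempty) (f : ι → ℝ) :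
    (𝔼 i ∈ s, f i) ^ 2 ≤ 𝔼 i ∈ s, f i ^ 2 := by
  simpa [expect_const hs] using expect_mul_sq_le_sq_mul_sq s f 1

theorem sum_Ico_natCast {a b : ℕ} (hab : a ≤ b) :
    ∑ k ∈ Ico a b, (k : ℝ) = ((b : ℝ) - a) * (a + b - 1) / 2 := by
  induction b, hab using Nat.le_induction with
  | base => simp
  | succ b hab ih => rw [sum_Ico_succ_top hab, ih]; push_cast; ring

theorem expect_Ico_natCast {a b : ℕ} (hab : a < b) :
    𝔼 k ∈ Ico a b, (k : ℝ) = (a + b - 1) / 2 := by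
  have hba : (b : ℝ) - a ≠ 0 := sub_ne_zero.2 (by exact_mod_cast hab.ne')
  rw [expect_eq_sum_div_card, sum_Ico_natCast hab.le, Nat.card_Ico, Nat.cast_sub hab.le]
  field_simp

section Ramp

variable {p : ℕ → ℝ} {ρ : ℝ} {K : ℕ}

theorem eq_add_sum_Ico_of_succ {g : ℕ → ℝ} (h : ∀ k, k + 2 ≤ K → p (k + 1) = p k + g k)
    {i j : ℕ} (hij : i ≤ j) (hj : j < K) : p j = p i + ∑ k ∈ Ico i j, g k := by
  have hg : ∑ k ∈ Ico i j, g k = ∑ k ∈ Ico i j, (p (k + 1) - p k) :=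
    sum_congr rfl fun k hk ↦ by rw [h k (by grind)]; ring
  rw [hg, sum_Ico_sub p hij]
  ring

theorem abs_sub_le_of_ramp (hp : ∀ k, k + 2 ≤ K → |p (k + 1) - p k| ≤ ρ)
    {i j : ℕ} (hij : i ≤ j) (hj : j < K) : |p j - p i| ≤ ρ * ((j : ℝ) - i) :=
  calc |p j - p i| = |∑ k ∈ Ico i j, (p (k + 1) - p k)| := by rw [sum_Ico_sub p hij]
    _ ≤ ∑ k ∈ Ico i j, |p (k + 1) - p k| := abs_sum_le_sum_abs _ _
    _ ≤ ∑ _k ∈ Ico i j, ρ := sum_le_sum fun k hk ↦ hp k (by grind)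
    _ = ρ * ((j : ℝ) - i) := by simp [Nat.cast_sub hij, mul_comm]

theorem expect_Ico_le_of_ramp_of_pred (hp : ∀ k, k + 2 ≤ K → |p (k + 1) - p k| ≤ ρ)
    {a b : ℕ} (ha : 0 < a) (hab : a < b) (hb : b ≤ K) :
    𝔼 k ∈ Ico a b, p k ≤ p (a - 1) + ρ * (((b : ℝ) - a + 1) / 2) :=
  calc 𝔼 k ∈ Ico a b, p k ≤ 𝔼 k ∈ Ico a b, (p (a - 1) + ρ * ((k : ℝ) - (a - 1 : ℕ))) :=
        expect_le_expect fun k hk ↦ by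
          have := abs_sub_le_of_ramp hp (i := a - 1) (j := k) (by grind) (by grind)
          linarith [le_abs_self (p k - p (a - 1))]
    _ = p (a - 1) + ρ * (((b : ℝ) - a + 1) / 2) := by
        have hne : (Ico a b).Nonempty := nonempty_Ico.2 hab
        rw [expect_add_distrib, ← mul_expect, expect_sub_distrib, expect_const hne,
          expect_const hne, expect_Ico_natCast hab, Nat.cast_pred ha]
        ring

theorem expect_Ico_le_of_ramp_of_succ (hp : ∀ k, k + 2 ≤ K → |p (k + 1) - p k| ≤ ρ)
    {a b : ℕ} (hab : a < b) (hb : b < K) :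
    𝔼 k ∈ Ico a b, p k ≤ p b + ρ * (((b : ℝ) - a + 1) / 2) :=
  calc 𝔼 k ∈ Ico a b, p k ≤ 𝔼 k ∈ Ico a b, (p b + ρ * ((b : ℝ) - k)) :=
        expect_le_expect fun k hk ↦ by
          have := abs_sub_le_of_ramp hp (i := k) (j := b) (by grind) hb
          linarith [neg_abs_le (p b - p k)]
    _ = p b + ρ * (((b : ℝ) - a + 1) / 2) := by
        have hne : (Ico a b).Nonempty := nonempty_Ico.2 hab
        rw [expect_add_distrib, ← mul_expect, expect_sub_distrib, expect_const hne,
          expect_const hne, expect_Ico_natCast hab]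
        ring

theorem aggregated_ramp_of_ramp (hp : ∀ k, k + 2 ≤ K → |p (k + 1) - p k| ≤ ρ)
    (hnn : ∀ k < K, 0 ≤ p k) {a b c : ℕ} (hab : a < b) (hbc : b < c) (hc : c ≤ K) :
    𝔼 k ∈ Ico b c, p k - (𝔼 k ∈ Ico a b, p k) * #(Ico a b)
        ≤ ρ + ρ * ((#(Ico b c) : ℝ) - 1) / 2 ∧
      𝔼 k ∈ Ico a b, p k - (𝔼 k ∈ Ico b c, p k) * #(Ico b c)
        ≤ ρ + ρ * ((#(Ico a b) : ℝ) - 1) / 2 := by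
  have hmem_le_sum {a b i : ℕ} (hb : b ≤ K) (hi : i ∈ Ico a b) :
      p i ≤ (𝔼 k ∈ Ico a b, p k) * #(Ico a b) := by
    rw [mul_comm, card_mul_expect]
    exact single_le_sum (fun k hk ↦ hnn k (by grind)) hi
  have hlast := hmem_le_sum (a := a) (i := b - 1) (hbc.le.trans hc) (by grind)
  have hfirst := hmem_le_sum (a := b) (i := b) hc (by grind)
  have hleft := expect_Ico_le_of_ramp_of_pred hp ((Nat.zero_le a).trans_lt hab) hbc hc
  have hright := expect_Ico_le_of_ramp_of_succ hp hab (hbc.trans_le hc)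
  simp only [Nat.card_Ico, Nat.cast_sub hab.le, Nat.cast_sub hbc.le] at hlast hfirst ⊢
  constructor <;> linarith

end Ramp

theorem compensated_emission_of_expect {ι : Type*} {s : Finset ι} (hs : s.Nonempty) {p : ι → ℝ}
    {α β L pmax : ℝ} (hα : 0 ≤ α) (hp : ∀ i ∈ s, 0 ≤ p i ∧ p i ≤ pmax)
    (hem : ∀ i ∈ s, α * p i ^ 2 + β * p i ≤ L) :
    α * #s * (𝔼 i ∈ s, p i) ^ 2 - α * (#s - 1) * pmax ^ 2 + β * 𝔼 i ∈ s, p i ≤ L := by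
  obtain ⟨hnonneg, hle⟩ := expect_mem_Icc hs hp
  have hjensen := sq_expect_le_expect_sq hs p
  have hmean : α * 𝔼 i ∈ s, p i ^ 2 + β * 𝔼 i ∈ s, p i ≤ L := by
    rw [mul_expect, mul_expect, ← expect_add_distrib]
    exact expect_le hs hem
  have hcard : (1 : ℝ) ≤ #s := by exact_mod_cast hs.card_pos
  nlinarith [mul_nonneg (mul_nonneg hα (sub_nonneg.2 hcard))
    (sub_nonneg.2 (pow_le_pow_left₀ hnonneg hle 2)), mul_nonneg hα (sub_nonneg.2 hjensen)]

section Aggregation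

variable {Ω N G : Type*} {t : ℕ → ℕ} {R : ℕ} {z : DispatchVars Ω N G}

theorem apply_succ_le_of_lt (hmono : ∀ r < R, t r < t (r + 1)) {r : ℕ} (hr : r < R) :
    t (r + 1) ≤ t R :=
  (strictMonoOn_Iic_of_lt_succ hmono).monotoneOn hr (le_refl R) hr

theorem lt_of_mem_Ico_of_lt (hmono : ∀ r < R, t r < t (r + 1)) {r k : ℕ} (hr : r < R)
    (hk : k ∈ Ico (t r) (t (r + 1))) : k < t R :=
  (mem_Ico.1 hk).2.trans_le (apply_succ_le_of_lt hmono hr)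

theorem apply_lt_of_lt (hmono : ∀ r < R, t r < t (r + 1)) {r : ℕ} (hr : r < R) : t r < t R :=
  (hmono r hr).trans_le (apply_succ_le_of_lt hmono hr)

theorem clusterCard_eq_card (t : ℕ → ℕ) (r : ℕ) :
    clusterCard t r = #(Ico (t r) (t (r + 1))) := by
  rw [clusterCard, Nat.card_Ico]

theorem one_div_clusterCard_mul_sum (t : ℕ → ℕ) (r : ℕ) (f : ℕ → ℝ) :
    1 / clusterCard t r * ∑ k ∈ Ico (t r) (t (r + 1)), f k =
      𝔼 k ∈ Ico (t r) (t (r + 1)), f k := by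
  rw [expect_eq_sum_div_card, clusterCard_eq_card, one_div_mul_eq_div]

variable (ω : Ω) (r : ℕ)

@[simp] theorem aggregate_e : (aggregate t z).e ω r = 𝔼 k ∈ Ico (t r) (t (r + 1)), z.e ω k :=
  one_div_clusterCard_mul_sum ..

@[simp] theorem aggregate_ens :
    (aggregate t z).ens ω r = 𝔼 k ∈ Ico (t r) (t (r + 1)), z.ens ω k :=
  one_div_clusterCard_mul_sum ..

@[simp] theorem aggregate_es (n : N) : (aggregate t z).es n ω r = z.es n ω (t r) := rfl

@[simp] theorem aggregate_pth (g : G) :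
    (aggregate t z).pth g ω r = 𝔼 k ∈ Ico (t r) (t (r + 1)), z.pth g ω k :=
  one_div_clusterCard_mul_sum ..

@[simp] theorem aggregate_pc (n : N) :
    (aggregate t z).pc n ω r = 𝔼 k ∈ Ico (t r) (t (r + 1)), z.pc n ω k :=
  one_div_clusterCard_mul_sum ..

@[simp] theorem aggregate_pd (n : N) :
    (aggregate t z).pd n ω r = 𝔼 k ∈ Ico (t r) (t (r + 1)), z.pd n ω k :=
  one_div_clusterCard_mul_sum ..

end Aggregation

theorem FSFeasible.e_nonneg {Ω N G : Type*} [Fintype N] [Fintype G] {P : VPPParams Ω N G}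
    {K : ℕ} {z : DispatchVars Ω N G} (hz : FSFeasible P K z) (ω : Ω) {k : ℕ} (hk : k < K) :
    0 ≤ z.e ω k := by
  obtain ⟨-, -, -, -, -, -, -, -, -, hnn, -⟩ := hz
  exact (hnn ω k hk).1

theorem aggFeasible_aggregate {Ω N G : Type*} [Fintype N] [Fintype G] {P : VPPParams Ω N G}
    {R : ℕ} {t : ℕ → ℕ} {z : DispatchVars Ω N G} (ht0 : t 0 = 0)
    (hmono : ∀ r < R, t r < t (r + 1)) (hα : ∀ g, 0 ≤ P.αg g) (hz : FSFeasible P (t R) z) :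
    AggFeasible P R t (aggregate t z) := by
  obtain ⟨hdyn, hinit, hes, hpc, hpd, hpth, hem, hramp, hbal, hnn, hnn'⟩ := hz
  have hcl {r k : ℕ} (hr : r < R) (hk : k ∈ Ico (t r) (t (r + 1))) : k < t R :=
    lt_of_mem_Ico_of_lt hmono hr hk
  have hne {r : ℕ} (hr : r < R) : (Ico (t r) (t (r + 1))).Nonempty :=
    nonempty_Ico.2 (hmono r hr)
  simp only [AggFeasible, aggregate_e, aggregate_ens, aggregate_es, aggregate_pth, aggregate_pc,
    aggregate_pd, clusterCard_eq_card, ← expect_eq_sum_div_card]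
  refine ⟨fun ω r hr ↦ ?_, fun n ω r hr ↦ ?_,
    fun n ω ↦ (congrArg (z.es n ω) ht0).trans (hinit n ω),
    fun n ω r hr ↦ hes n ω _ (apply_lt_of_lt hmono hr),
    fun n ω r hr ↦ expect_mem_Icc (hne hr) fun k hk ↦ hpc n ω k (hcl hr hk),
    fun n ω r hr ↦ expect_mem_Icc (hne hr) fun k hk ↦ hpd n ω k (hcl hr hk),
    fun g ω r hr ↦ expect_mem_Icc (hne hr) fun k hk ↦ hpth g ω k (hcl hr hk),
    fun g ω r hr ↦ compensated_emission_of_expect (hne hr) (hα g)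
      (fun k hk ↦ hpth g ω k (hcl hr hk)) fun k hk ↦ hem g ω k (hcl hr hk),
    fun g ω r hr ↦ aggregated_ramp_of_ramp (hramp g ω) (fun k hk ↦ (hpth g ω k hk).1)
      (hmono r (by omega)) (hmono (r + 1) hr) (apply_succ_le_of_lt hmono hr),
    fun ω r hr ↦ ⟨expect_nonneg fun k hk ↦ (hnn ω k (hcl hr hk)).1,
      expect_nonneg fun k hk ↦ (hnn ω k (hcl hr hk)).2⟩,
    fun n ω r hr ↦ ⟨(hnn' n ω (t r) (apply_lt_of_lt hmono hr)).1,
      expect_nonneg fun k hk ↦ (hnn' n ω k (hcl hr hk)).2.1,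
      expect_nonneg fun k hk ↦ (hnn' n ω k (hcl hr hk)).2.2⟩⟩
  · rw [expect_congr rfl fun k hk ↦ hbal ω k (hcl hr hk)]
    simp only [expect_add_distrib, expect_sub_distrib, ← expect_mul, expect_sum_comm]
    ring
  · rw [eq_add_sum_Ico_of_succ (hdyn n ω) (hmono r (by omega)).le (apply_lt_of_lt hmono hr),
      ← card_mul_expect]
    simp only [← expect_mul, expect_sub_distrib, ← mul_expect]
    ring

theorem card_mul_aggCost_le_sum_cost {Ω N G : Type*} [Fintype N] [Fintype G]
    (P : VPPParams Ω N G) (z : DispatchVars Ω N G) (ω : Ω) {s : Finset ℕ} (hs : s.Nonempty)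
    (he : ∀ k ∈ s, 0 ≤ z.e ω k) :
    (#s : ℝ) * (-(s.sup' hs (P.π ω) * 𝔼 k ∈ s, z.e ω k)
        + ∑ g, P.Cth g * (𝔼 k ∈ s, z.pth g ω k) * P.Δ + P.Cns * (𝔼 k ∈ s, z.ens ω k)
        + ∑ n, (P.Cc n * (𝔼 k ∈ s, z.pc n ω k) + P.Cd n * 𝔼 k ∈ s, z.pd n ω k) * P.Δ)
      ≤ ∑ k ∈ s, (-(P.π ω k) * z.e ω k + ∑ g, P.Cth g * z.pth g ω k * P.Δ
        + P.Cns * z.ens ω k + ∑ n, (P.Cc n * z.pc n ω k + P.Cd n * z.pd n ω k) * P.Δ) :=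
  calc _ = ∑ k ∈ s, (-(s.sup' hs (P.π ω) * z.e ω k) + ∑ g, P.Cth g * z.pth g ω k * P.Δ
        + P.Cns * z.ens ω k + ∑ n, (P.Cc n * z.pc n ω k + P.Cd n * z.pd n ω k) * P.Δ) := by
        rw [← card_mul_expect s]
        congr 1
        simp only [expect_add_distrib, expect_neg_distrib, mul_expect, expect_mul, add_mul,
          expect_sum_comm]
    _ ≤ _ := sum_le_sum fun k hk ↦ by
        have := mul_le_mul_of_nonneg_right (le_sup' (P.π ω) hk) (he k hk)
        linarith

theorem aggObj_aggregate_le_fsObj {Ω N G : Type*} [Fintype Ω] [Fintype N] [Fintype G]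
    {P : VPPParams Ω N G} {R : ℕ} {t : ℕ → ℕ} {z : DispatchVars Ω N G} (ht0 : t 0 = 0)
    (hmono : ∀ r < R, t r < t (r + 1)) (hCref : ∀ n, 0 ≤ P.Cref n)
    (he : ∀ ω k, k < t R → 0 ≤ z.e ω k) :
    AggObj P R t hmono (aggregate t z) ≤ FSObj P (t R) z := by
  have hpart := sum_range_eq_sum_fin_sum_Ico (M := ℝ) ht0 fun r hr ↦ (hmono r hr).le
  simp only [AggObj, FSObj, hpart, aggregate_e, aggregate_ens, aggregate_es, aggregate_pth,
    aggregate_pc, aggregate_pd, clusterCard_eq_card]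
  gcongr with ω _ r _ n _ ω _ r _
  · exact card_mul_aggCost_le_sum_cost P z ω _ fun k hk ↦
      he ω k (lt_of_mem_Ico_of_lt hmono r.2 hk)
  · exact single_le_sum (f := fun k ↦ P.Cref n * (z.es n ω k - P.Eref n) ^ 2)
      (fun k _ ↦ mul_nonneg (hCref n) (sq_nonneg _)) (left_mem_Ico.2 (hmono r r.2))

theorem agg_optimal_value_le_full_optimal_value_general
    {Ω N G : Type*} [Fintype Ω] [Fintype N] [Fintype G]
    (P : VPPParams Ω N G) (K R : ℕ)
    (t : ℕ → ℕ) (ht0 : t 0 = 0) (htR : t R = K) (hmono : ∀ r < R, t r < t (r + 1))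
    (hα : ∀ g, 0 ≤ P.αg g)
    (hCref : ∀ n, 0 ≤ P.Cref n)
    (S Sbar : Set ℝ)
    (hS : S = {v : ℝ | ∃ z : DispatchVars Ω N G, FSFeasible P K z ∧ FSObj P K z = v})
    (hSbar : Sbar = {v : ℝ | ∃ zbar : DispatchVars Ω N G,
        AggFeasible P R t zbar ∧ AggObj P R t hmono zbar = v}) :
    (∀ v ∈ S, ∃ vbar ∈ Sbar, vbar ≤ v) ∧
    (S.Nonempty → BddBelow Sbar → sInf Sbar ≤ sInf S) := by
  have hdom : ∀ v ∈ S, ∃ vbar ∈ Sbar, vbar ≤ v := by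
    subst hS hSbar htR
    rintro _ ⟨z, hz, rfl⟩
    exact ⟨_, ⟨aggregate t z, aggFeasible_aggregate ht0 hmono hα hz, rfl⟩,
      aggObj_aggregate_le_fsObj ht0 hmono hCref fun ω _ hk ↦ hz.e_nonneg ω hk⟩
  exact ⟨hdom, fun hne hbdd ↦ csInf_le_csInf_of_forall_exists_le hne hbdd hdom⟩

/-- the optimal value of the temporally aggregated model is a lower bound
on the optimal value of the full-scale model.  If `S` is the set of full-scale objective
values over full-scale feasible points and `S̄` the set of aggregated objective values
over aggregated feasible points, then every `v ∈ S` is dominated from below by some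
`v̄ ∈ S̄`; consequently, if `S` is nonempty and `S̄` is bounded below, `inf S̄ ≤ inf S`. -/
theorem agg_optimal_value_le_full_optimal_value
    {Ω N G : Type*} [Fintype Ω] [Fintype N] [Fintype G]
    [Nonempty Ω] [Nonempty N] [Nonempty G]
    (P : VPPParams Ω N G) (K R : ℕ) (hK : 1 ≤ K)
    (t : ℕ → ℕ) (ht0 : t 0 = 0) (htR : t R = K) (hmono : ∀ r < R, t r < t (r + 1))
    (hΔ : 0 < P.Δ)
    (hEs : ∀ n, P.Esmin n ≤ P.Esmax n)
    (hPc : ∀ n, P.Pcmin n ≤ P.Pcmax n)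
    (hPd : ∀ n, P.Pdmin n ≤ P.Pdmax n)
    (hPth : ∀ g, 0 ≤ P.Pthmax g)
    (hα : ∀ g, 0 ≤ P.αg g)
    (hRth : ∀ g, 0 ≤ P.Rth g)
    (hCref : ∀ n, 0 ≤ P.Cref n)
    (S Sbar : Set ℝ)
    (hS : S = {v : ℝ | ∃ z : DispatchVars Ω N G, FSFeasible P K z ∧ FSObj P K z = v})
    (hSbar : Sbar = {v : ℝ | ∃ zbar : DispatchVars Ω N G,
        AggFeasible P R t zbar ∧ AggObj P R t hmono zbar = v}) :
    (∀ v ∈ S, ∃ vbar ∈ Sbar, vbar ≤ v) ∧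
    (S.Nonempty → BddBelow Sbar → sInf Sbar ≤ sInf S) :=
  agg_optimal_value_le_full_optimal_value_general P K R t ht0 htR hmono hα hCref S Sbar hS hSbar
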